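/- arXiv:2602.06424 — 4 statements merged into one kernel-verified Lean document; each statement's English description precedes it below -/
import Mathlib

section
/- Let d ≥ 1, m, K ∈ ℝ^d, let ℓ : ℝ^d → ℝ be continuous such that both x ↦ e^{⟨K,x⟩} ℓ(x) and w ↦ ℓ̂(w + iK) are Lebesgue integrable on ℝ^d, and let X be an ℝ^d-valued random vector satisfying E[e^{-⟨K,X⟩}] < ∞. Then ℓ(X − m) is integrable and E[ℓ(X − m)] = (2π)^{-d} Re ∫_{ℝ^d} e^{⟨K,m⟩} e^{-i⟨w,m⟩} Φ_X(w + iK) ℓ̂(w + iK) dw. -/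
open MeasureTheory

/-- The damped Fourier transform `ℓ̂(w + iK) = ∫ e^{-i⟨w,x⟩} e^{⟨K,x⟩} ℓ(x) dx`. -/
noncomputable def dampedFT {d : ℕ} (ℓ : EuclideanSpace ℝ (Fin d) → ℝ)
    (K w : EuclideanSpace ℝ (Fin d)) : ℂ :=
  ∫ x : EuclideanSpace ℝ (Fin d),
    Complex.exp (-(Complex.I * ((inner ℝ w x : ℝ) : ℂ)) + ((inner ℝ K x : ℝ) : ℂ)) * (ℓ x : ℂ)

/-- The extended characteristic function `Φ_X(w + iK) = E[e^{i⟨w,X⟩ - ⟨K,X⟩}]`. -/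
noncomputable def extChar {Ω : Type*} [MeasurableSpace Ω] (P : Measure Ω) {d : ℕ}
    (X : Ω → EuclideanSpace ℝ (Fin d)) (K w : EuclideanSpace ℝ (Fin d)) : ℂ :=
  ∫ ω, Complex.exp (Complex.I * ((inner ℝ w (X ω) : ℝ) : ℂ)
      - ((inner ℝ K (X ω) : ℝ) : ℂ)) ∂P

open FourierTransform Real

section Aux

variable {d : ℕ} (ℓ : EuclideanSpace ℝ (Fin d) → ℝ) (K : EuclideanSpace ℝ (Fin d))

lemma dampedFT_eq_fourier (w : EuclideanSpace ℝ (Fin d)) :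
    dampedFT ℓ K w
      = 𝓕 (fun x : EuclideanSpace ℝ (Fin d) => ((Real.exp (inner ℝ K x) * ℓ x : ℝ) : ℂ))
        ((2 * π)⁻¹ • w) := by
  rw [Real.fourier_eq']
  unfold dampedFT
  congr 1; funext x
  have hπ : (2 * π) ≠ 0 := by positivity
  have h1 : (inner ℝ x ((2 * π)⁻¹ • w) : ℝ) = (2 * π)⁻¹ * inner ℝ w x := by
    rw [real_inner_smul_right, real_inner_comm]
  have h2 : (-2 * π * ((2 * π)⁻¹ * (inner ℝ w x : ℝ)) : ℝ) = -(inner ℝ w x : ℝ) := by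
    field_simp
  rw [h1, h2, smul_eq_mul]
  push_cast
  rw [Complex.exp_add]
  ring

lemma dampedFT_continuous
    (hint : Integrable (fun x : EuclideanSpace ℝ (Fin d) => Real.exp (inner ℝ K x) * ℓ x)) :
    Continuous (fun w => dampedFT ℓ K w) := by
  have hg : Integrable (fun x : EuclideanSpace ℝ (Fin d) =>
      ((Real.exp (inner ℝ K x) * ℓ x : ℝ) : ℂ)) := hint.ofReal
  have hcont : Continuous (𝓕 (fun x : EuclideanSpace ℝ (Fin d) =>
      ((Real.exp (inner ℝ K x) * ℓ x : ℝ) : ℂ))) := by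
    apply VectorFourier.fourierIntegral_continuous Real.continuous_fourierChar
      (by exact continuous_inner) hg
  simp_rw [dampedFT_eq_fourier ℓ K]
  exact hcont.comp (continuous_const_smul _)

lemma key_inversion (hℓ : Continuous ℓ)
    (hint : Integrable (fun x : EuclideanSpace ℝ (Fin d) => Real.exp (inner ℝ K x) * ℓ x))
    (hFT : Integrable (fun w : EuclideanSpace ℝ (Fin d) => dampedFT ℓ K w))
    (y : EuclideanSpace ℝ (Fin d)) :
    ∫ w : EuclideanSpace ℝ (Fin d),
        Complex.exp (Complex.I * ((inner ℝ w y : ℝ) : ℂ)) * dampedFT ℓ K w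
      = (((2 * π) ^ d : ℝ) : ℂ) * Complex.exp ((inner ℝ K y : ℝ) : ℂ) * (ℓ y : ℂ) := by
  set g : EuclideanSpace ℝ (Fin d) → ℂ :=
    fun x => ((Real.exp (inner ℝ K x) * ℓ x : ℝ) : ℂ) with hgdef
  have hπ : (0:ℝ) < 2 * π := by positivity
  have hπ' : ((2 * π)⁻¹ : ℝ) ≠ 0 := by positivity
  have hg : Integrable g := hint.ofReal
  have hgc : Continuous g := by
    apply Complex.continuous_ofReal.comp
    exact (Real.continuous_exp.comp (continuous_const.inner continuous_id)).mul hℓ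
  have hFTg : Integrable (𝓕 g) := by
    have h := hFT
    simp_rw [dampedFT_eq_fourier ℓ K] at h
    exact (integrable_comp_smul_iff volume (𝓕 g) hπ').1 h
  have hinv : 𝓕⁻ (𝓕 g) y = g y := hg.fourierInv_fourier_eq hFTg hgc.continuousAt
  set F : EuclideanSpace ℝ (Fin d) → ℂ :=
    fun v => Complex.exp (((2 * π * (inner ℝ v y : ℝ) : ℝ) : ℂ) * Complex.I) * 𝓕 g v with hFdef
  have hIF : ∫ v, F v = g y := by
    rw [← hinv, Real.fourierInv_eq']
    simp only [hFdef, smul_eq_mul]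
  have hcomp : ∀ w : EuclideanSpace ℝ (Fin d), F ((2 * π)⁻¹ • w)
      = Complex.exp (Complex.I * ((inner ℝ w y : ℝ) : ℂ)) * dampedFT ℓ K w := by
    intro w
    have h1 : (inner ℝ ((2 * π)⁻¹ • w) y : ℝ) = (2 * π)⁻¹ * inner ℝ w y := by
      rw [real_inner_smul_left]
    have h2 : (2 * π * ((2 * π)⁻¹ * (inner ℝ w y : ℝ)) : ℝ) = (inner ℝ w y : ℝ) := by
      field_simp
    rw [hFdef, dampedFT_eq_fourier ℓ K w]
    simp only [h1, h2]
    rw [hgdef]; ring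
  have hcv := MeasureTheory.Measure.integral_comp_smul (μ := volume) F ((2 * π)⁻¹ : ℝ)
  rw [finrank_euclideanSpace_fin] at hcv
  have habs : |((((2 * π)⁻¹ : ℝ)) ^ d)⁻¹| = ((2 * π) ^ d : ℝ) := by
    rw [abs_of_nonneg (by positivity)]
    rw [← inv_pow, inv_inv]
  rw [habs, hIF] at hcv
  simp_rw [hcomp] at hcv
  rw [hcv, hgdef]
  rw [Complex.real_smul]
  push_cast
  ring

end Aux

/-- Fourier representation of the expected loss `E[ℓ(X - m)]`. -/
theorem stmt_1 {Ω : Type*} [MeasurableSpace Ω] (P : Measure Ω) [IsProbabilityMeasure P]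
    (d : ℕ) (hd : 1 ≤ d) (m K : EuclideanSpace ℝ (Fin d))
    (ℓ : EuclideanSpace ℝ (Fin d) → ℝ) (hℓ : Continuous ℓ)
    (hint : Integrable (fun x : EuclideanSpace ℝ (Fin d) =>
      Real.exp (inner ℝ K x : ℝ) * ℓ x))
    (hFT : Integrable (fun w : EuclideanSpace ℝ (Fin d) => dampedFT ℓ K w))
    (X : Ω → EuclideanSpace ℝ (Fin d)) (hX : Measurable X)
    (hexp : Integrable (fun ω => Real.exp (-(inner ℝ K (X ω) : ℝ))) P) :
    Integrable (fun ω => ℓ (X ω - m)) P ∧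
    ∫ ω, ℓ (X ω - m) ∂P =
      (((2 * Real.pi) ^ d)⁻¹ : ℝ) *
        (∫ w : EuclideanSpace ℝ (Fin d),
          Complex.exp ((inner ℝ K m : ℝ) : ℂ) *
            Complex.exp (-(Complex.I * ((inner ℝ w m : ℝ) : ℂ))) *
            extChar P X K w * dampedFT ℓ K w).re := by
  have hπd : (0:ℝ) < (2 * π) ^ d := by positivity
  set C : ℝ := ∫ w : EuclideanSpace ℝ (Fin d), ‖dampedFT ℓ K w‖ with hCdef
  have hC0 : 0 ≤ C := integral_nonneg fun w => norm_nonneg _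
  -- pointwise bound on ℓ
  have hbound : ∀ y : EuclideanSpace ℝ (Fin d),
      |ℓ y| ≤ ((2 * π) ^ d)⁻¹ * C * Real.exp (-(inner ℝ K y : ℝ)) := by
    intro y
    have hk := key_inversion ℓ K hℓ hint hFT y
    have h1 : ‖∫ w : EuclideanSpace ℝ (Fin d),
        Complex.exp (Complex.I * ((inner ℝ w y : ℝ) : ℂ)) * dampedFT ℓ K w‖ ≤ C := by
      refine le_trans (norm_integral_le_integral_norm _) (le_of_eq ?_)
      rw [hCdef]
      congr 1; funext w
      rw [norm_mul]
      have : ‖Complex.exp (Complex.I * ((inner ℝ w y : ℝ) : ℂ))‖ = 1 := by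
        simp [Complex.norm_exp, Complex.mul_re]
      rw [this, one_mul]
    rw [hk] at h1
    have h2 : (2 * π) ^ d * Real.exp (inner ℝ K y : ℝ) * |ℓ y| ≤ C := by
      refine le_trans (le_of_eq ?_) h1
      simp only [norm_mul, Complex.norm_real, Real.norm_eq_abs, Complex.norm_exp,
        Complex.ofReal_re]
      rw [abs_of_nonneg hπd.le]
    have hE : (0:ℝ) < Real.exp (inner ℝ K y : ℝ) := Real.exp_pos _
    calc |ℓ y| = ((2 * π) ^ d * Real.exp (inner ℝ K y : ℝ))⁻¹ *
          ((2 * π) ^ d * Real.exp (inner ℝ K y : ℝ) * |ℓ y|) := by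
          field_simp
      _ ≤ ((2 * π) ^ d * Real.exp (inner ℝ K y : ℝ))⁻¹ * C := by
          exact mul_le_mul_of_nonneg_left h2 (by positivity)
      _ = ((2 * π) ^ d)⁻¹ * C * Real.exp (-(inner ℝ K y : ℝ)) := by
          rw [Real.exp_neg, mul_inv]
          ring
  -- measurability
  have hXm : Measurable fun ω => X ω - m := hX.sub measurable_const
  have hmeas : AEStronglyMeasurable (fun ω => ℓ (X ω - m)) P :=
    (hℓ.measurable.comp hXm).aestronglyMeasurable
  -- integrability of ℓ (X - m)
  have hint1 : Integrable (fun ω => ℓ (X ω - m)) P := by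
    refine Integrable.mono' (g := fun ω =>
      ((2 * π) ^ d)⁻¹ * C * (Real.exp (inner ℝ K m : ℝ) * Real.exp (-(inner ℝ K (X ω) : ℝ))))
      (((hexp.const_mul _).const_mul _)) hmeas ?_
    filter_upwards with ω
    have := hbound (X ω - m)
    rw [Real.norm_eq_abs]
    refine le_trans this (le_of_eq ?_)
    rw [inner_sub_right]
    rw [neg_sub, Real.exp_sub, Real.exp_neg]
    field_simp
  refine ⟨hint1, ?_⟩
  -- the joint integrand
  set H : Ω → EuclideanSpace ℝ (Fin d) → ℂ := fun ω w =>
    Complex.exp ((inner ℝ K m : ℝ) : ℂ) *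
      Complex.exp (-(Complex.I * ((inner ℝ w m : ℝ) : ℂ))) *
      Complex.exp (Complex.I * ((inner ℝ w (X ω) : ℝ) : ℂ) - ((inner ℝ K (X ω) : ℝ) : ℂ)) *
      dampedFT ℓ K w with hHdef
  have hdampc : Continuous (fun w => dampedFT ℓ K w) := dampedFT_continuous ℓ K hint
  -- measurability of uncurried H
  have hHmeas : AEStronglyMeasurable (Function.uncurry H) (P.prod volume) := by
    apply Measurable.aestronglyMeasurable
    apply Measurable.mul
    apply Measurable.mul
    apply Measurable.mul
    · exact measurable_const
    · refine Complex.measurable_exp.comp ?_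
      refine Measurable.neg ?_
      refine (measurable_const.mul ?_)
      exact Complex.measurable_ofReal.comp
        ((measurable_snd.inner measurable_const))
    · refine Complex.measurable_exp.comp ?_
      refine Measurable.sub ?_ ?_
      · exact measurable_const.mul
          (Complex.measurable_ofReal.comp (measurable_snd.inner (hX.comp measurable_fst)))
      · exact Complex.measurable_ofReal.comp (measurable_const.inner (hX.comp measurable_fst))
    · exact hdampc.measurable.comp measurable_snd
  -- norm of H
  have hHnorm : ∀ ω w, ‖H ω w‖ =
      (Real.exp (inner ℝ K m : ℝ) * Real.exp (-(inner ℝ K (X ω) : ℝ))) * ‖dampedFT ℓ K w‖ := by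
    intro ω w
    simp only [hHdef, norm_mul]
    have e1 : ‖Complex.exp ((inner ℝ K m : ℝ) : ℂ)‖ = Real.exp (inner ℝ K m : ℝ) := by
      simp [Complex.norm_exp]
    have e2 : ‖Complex.exp (-(Complex.I * ((inner ℝ w m : ℝ) : ℂ)))‖ = 1 := by
      simp [Complex.norm_exp, Complex.mul_re]
    have e3 : ‖Complex.exp (Complex.I * ((inner ℝ w (X ω) : ℝ) : ℂ)
        - ((inner ℝ K (X ω) : ℝ) : ℂ))‖ = Real.exp (-(inner ℝ K (X ω) : ℝ)) := by
      simp [Complex.norm_exp, Complex.mul_re]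
    rw [e1, e2, e3]
    ring
  -- joint integrability
  have hHint : Integrable (Function.uncurry H) (P.prod volume) := by
    have hprod : Integrable (fun p : Ω × EuclideanSpace ℝ (Fin d) =>
        (Real.exp (inner ℝ K m : ℝ) * Real.exp (-(inner ℝ K (X p.1) : ℝ))) * ‖dampedFT ℓ K p.2‖)
        (P.prod volume) := (hexp.const_mul _).mul_prod hFT.norm
    refine hprod.mono' hHmeas ?_
    filter_upwards with p
    rw [Function.uncurry, hHnorm p.1 p.2]
  have hswap := MeasureTheory.integral_integral_swap hHint
  -- inner ℝ integral over w
  have hInnerW : ∀ ω, (∫ w, H ω w) = (((2 * π) ^ d : ℝ) : ℂ) * ((ℓ (X ω - m) : ℝ) : ℂ) := by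
    intro ω
    have hrw : (fun w => H ω w) = fun w =>
        Complex.exp (((inner ℝ K m : ℝ) : ℂ) - ((inner ℝ K (X ω) : ℝ) : ℂ)) *
          (Complex.exp (Complex.I * ((inner ℝ w (X ω - m) : ℝ) : ℂ)) * dampedFT ℓ K w) := by
      funext w
      simp only [hHdef, inner_sub_right, Complex.ofReal_sub, mul_sub, Complex.exp_sub,
        Complex.exp_neg]
      field_simp
    rw [hrw, MeasureTheory.integral_const_mul, key_inversion ℓ K hℓ hint hFT (X ω - m)]
    have hcB : Complex.exp (((inner ℝ K m : ℝ) : ℂ) - ((inner ℝ K (X ω) : ℝ) : ℂ)) *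
        Complex.exp (((inner ℝ K (X ω - m) : ℝ) : ℂ)) = 1 := by
      rw [← Complex.exp_add, inner_sub_right]
      push_cast
      ring_nf
      exact Complex.exp_zero
    linear_combination (((2 * π) ^ d : ℝ) : ℂ) * ((ℓ (X ω - m) : ℝ) : ℂ) * hcB
  -- outer integral over ω
  have hL : (∫ ω, (∫ w, H ω w) ∂P)
      = (((2 * π) ^ d : ℝ) : ℂ) * (((∫ ω, ℓ (X ω - m) ∂P) : ℝ) : ℂ) := by
    simp_rw [hInnerW]
    have hcast : ∫ ω, ((ℓ (X ω - m) : ℝ) : ℂ) ∂P = ((∫ ω, ℓ (X ω - m) ∂P : ℝ) : ℂ) :=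
      integral_ofReal
    rw [MeasureTheory.integral_const_mul, hcast]
  -- inner ℝ integral over ω for fixed w
  have hR : ∀ w, (∫ ω, H ω w ∂P)
      = Complex.exp ((inner ℝ K m : ℝ) : ℂ) *
          Complex.exp (-(Complex.I * ((inner ℝ w m : ℝ) : ℂ))) *
          extChar P X K w * dampedFT ℓ K w := by
    intro w
    rw [extChar]
    simp only [hHdef]
    simp_rw [mul_assoc]
    rw [MeasureTheory.integral_const_mul, MeasureTheory.integral_const_mul,
      MeasureTheory.integral_mul_const]
  have hfinal : (((2 * π) ^ d : ℝ) : ℂ) * (((∫ ω, ℓ (X ω - m) ∂P) : ℝ) : ℂ)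
      = ∫ w : EuclideanSpace ℝ (Fin d),
          Complex.exp ((inner ℝ K m : ℝ) : ℂ) *
            Complex.exp (-(Complex.I * ((inner ℝ w m : ℝ) : ℂ))) *
            extChar P X K w * dampedFT ℓ K w := by
    rw [← hL, hswap]
    exact integral_congr_ae (Filter.Eventually.of_forall hR)
  have hre := congrArg Complex.re hfinal
  rw [← Complex.ofReal_mul, Complex.ofReal_re] at hre
  rw [← hre]
  field_simp
end

section
/- Let (Ω, F, P) be a probability space, (E, Ɛ) a measurable space, and let (V_s)_{s≥1} be independent E-valued random variables, each with the same distribution μ. Let M ⊆ ℝ^k be a nonempty compact set and let h : E × ℝ^k → ℝ be such that v ↦ h(v,m) is measurable for every m ∈ M, m ↦ h(v,m) is continuous on M for every v ∈ E, and there exists H ∈ L¹(μ) with |h(v,m)| ≤ H(v) for all v ∈ E and m ∈ M. Then P-almost surely, sup_{m ∈ M} | (1/S) Σ_{s=1}^S h(V_s, m) − ∫_E h(v,m) dμ(v) | → 0 as S → ∞. -/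
open MeasureTheory ProbabilityTheory Filter Set

lemma aux_measurable_of_dist {β X : Type*} [MeasurableSpace β] [PseudoMetricSpace X]
    [TopologicalSpace.SeparableSpace X] [Nonempty X] [MeasurableSpace X] [BorelSpace X]
    {f : β → X} (hf : ∀ g : X, Measurable fun b => dist (f b) g) : Measurable f := by
  obtain ⟨d, hd⟩ := TopologicalSpace.exists_dense_seq X
  apply measurable_of_isOpen
  intro U hU
  have hrep : f ⁻¹' U = ⋃ (n : ℕ) (q : ℚ) (_ : Metric.ball (d n) q ⊆ U),
      (fun b => dist (f b) (d n)) ⁻¹' Set.Iio (q : ℝ) := by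
    ext b
    simp only [Set.mem_preimage, Set.mem_iUnion, Set.mem_Iio]
    constructor
    · intro hb
      obtain ⟨ε, hε, hball⟩ := Metric.isOpen_iff.1 hU _ hb
      obtain ⟨n, hn⟩ := (Metric.denseRange_iff).1 hd (f b) (ε/4) (by linarith)
      obtain ⟨q, hq1, hq2⟩ := exists_rat_btwn (show (ε/4 : ℝ) < ε/2 by linarith)
      refine ⟨n, q, ?_, lt_of_lt_of_le (by simpa [dist_comm] using hn) hq1.le⟩
      intro y hy
      apply hball
      rw [Metric.mem_ball] at hy ⊢
      calc dist y (f b) ≤ dist y (d n) + dist (d n) (f b) := dist_triangle _ _ _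
        _ < q + ε/4 := add_lt_add hy (by simpa [dist_comm] using hn)
        _ < ε := by linarith
    · rintro ⟨n, q, hsub, hb⟩
      exact hsub (by simpa [Metric.mem_ball, dist_comm] using hb)
  rw [hrep]
  exact MeasurableSet.iUnion fun n => .iUnion fun q => .iUnion fun _ =>
    (hf (d n)) measurableSet_Iio

lemma aux_iSup_dense {K : Type*} [TopologicalSpace K] [CompactSpace K] [Nonempty K]
    {u : K → ℝ} (hu : Continuous u) {d : ℕ → K} (hd : DenseRange d) :
    ⨆ x, u x = ⨆ n, u (d n) := by
  have hbdd : BddAbove (Set.range u) := (isCompact_range hu).bddAbove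
  have hbdd' : BddAbove (Set.range (fun n => u (d n))) :=
    hbdd.mono (Set.range_comp_subset_range d u)
  apply le_antisymm
  · apply ciSup_le
    intro x
    have hx : u x ∈ closure (u '' Set.range d) :=
      (image_closure_subset_closure_image hu) ⟨x, hd x, rfl⟩
    have hcl : closure (u '' Set.range d) ⊆ {y : ℝ | y ≤ ⨆ n, u (d n)} := by
      apply closure_minimal _ (isClosed_le continuous_id continuous_const)
      rintro y ⟨z, ⟨n, rfl⟩, rfl⟩
      exact le_ciSup hbdd' n
    exact hcl hx
  · exact ciSup_le fun n => le_ciSup hbdd (d n)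

/-- Uniform strong law of large numbers over a compact parameter set. -/
theorem stmt_6 {Ω : Type*} [MeasurableSpace Ω] (P : Measure Ω) [IsProbabilityMeasure P]
    {E : Type*} [MeasurableSpace E] (μ : Measure E)
    (V : ℕ → Ω → E) (hVmeas : ∀ s, Measurable (V s))
    (hindep : iIndepFun V P)
    (hlaw : ∀ s, P.map (V s) = μ)
    (k : ℕ) (M : Set (EuclideanSpace ℝ (Fin k))) (hMne : M.Nonempty)
    (hMcpt : IsCompact M)
    (h : E → EuclideanSpace ℝ (Fin k) → ℝ)
    (hmeas : ∀ m ∈ M, Measurable fun v => h v m)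
    (hcont : ∀ v, ContinuousOn (fun m => h v m) M)
    (H : E → ℝ) (hH : Integrable H μ)
    (hbound : ∀ v, ∀ m ∈ M, |h v m| ≤ H v) :
    ∀ᵐ ω ∂P, Tendsto (fun S : ℕ =>
        ⨆ m : M, |(S : ℝ)⁻¹ * ∑ s ∈ Finset.Icc 1 S, h (V s ω) m - ∫ v, h v m ∂μ|)
      atTop (nhds 0) := by
  haveI : CompactSpace ↥M := isCompact_iff_compactSpace.mp hMcpt
  haveI : Nonempty ↥M := hMne.to_subtype
  letI : MeasurableSpace C(↥M, ℝ) := borel _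
  haveI : BorelSpace C(↥M, ℝ) := ⟨rfl⟩
  obtain ⟨d, hd⟩ := TopologicalSpace.exists_dense_seq ↥M
  -- the map into the space of continuous functions
  set Φ : E → C(↥M, ℝ) := fun v => ⟨M.restrict (h v), (hcont v).restrict⟩ with hΦdef
  -- measurability of Φ
  have hΦ : Measurable Φ := by
    apply aux_measurable_of_dist
    intro g
    have hrw : (fun v => dist (Φ v) g) = fun v => ⨆ n, |h v (d n) - g (d n)| := by
      funext v
      rw [dist_eq_norm, ContinuousMap.norm_eq_iSup_norm]
      rw [aux_iSup_dense ((Φ v - g).continuous.norm) hd]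
      simp [Real.norm_eq_abs, hΦdef, Set.restrict]
    rw [hrw]
    apply Measurable.iSup
    intro n
    exact ((hmeas (d n) (d n).2).sub measurable_const).abs
  -- norm bound
  have hΦnorm : ∀ v, ‖Φ v‖ ≤ H v := by
    intro v
    have h0 : 0 ≤ H v := le_trans (abs_nonneg _)
      (hbound v _ (Classical.choice ‹Nonempty ↥M›).2)
    rw [ContinuousMap.norm_le _ h0]
    intro x
    exact (Real.norm_eq_abs _).trans_le (hbound v x x.2)
  -- integrability of Φ wrt μ
  have hΦint : Integrable Φ μ := by
    refine Integrable.mono' hH hΦ.aestronglyMeasurable ?_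
    exact Filter.Eventually.of_forall hΦnorm
  -- the C(M)-valued random variables
  set X : ℕ → Ω → C(↥M, ℝ) := fun i ω => Φ (V (i + 1) ω) with hXdef
  have hXmeas : ∀ i, Measurable (X i) := fun i => hΦ.comp (hVmeas (i + 1))
  have hmapX : ∀ i, P.map (X i) = μ.map Φ := by
    intro i
    show Measure.map (Φ ∘ (V (i+1))) P = μ.map Φ
    rw [← Measure.map_map hΦ (hVmeas (i+1)), hlaw]
  have hident : ∀ i, IdentDistrib (X i) (X 0) P P := fun i =>
    ⟨(hXmeas i).aemeasurable, (hXmeas 0).aemeasurable, by rw [hmapX, hmapX]⟩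
  have hindepX : Pairwise (Function.onFun (IndepFun · · P) X) := by
    intro i j hij
    exact (hindep.indepFun (show i + 1 ≠ j + 1 by omega)).comp hΦ hΦ
  have hint : Integrable (X 0) P := by
    refine Integrable.mono' ?_ (hXmeas 0).aestronglyMeasurable
      (Filter.Eventually.of_forall fun ω => hΦnorm (V 1 ω))
    have : Integrable H (P.map (V 1)) := by rw [hlaw]; exact hH
    exact (integrable_map_measure this.aestronglyMeasurable (hVmeas 1).aemeasurable).1 this
  -- strong law
  have hslln := strong_law_ae (μ := P) X hint hindepX hident
  -- identify the limit
  have hΦint' : Integrable Φ (P.map (V 1)) := by rw [hlaw]; exact hΦint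
  have hlim : P[X 0] = ∫ v, Φ v ∂μ := by
    calc P[X 0] = ∫ y, Φ y ∂(P.map (V 1)) :=
          (integral_map (hVmeas 1).aemeasurable hΦint'.aestronglyMeasurable).symm
      _ = ∫ v, Φ v ∂μ := by rw [hlaw]
  have heval : ∀ m : ↥M, (∫ v, Φ v ∂μ) m = ∫ v, h v m ∂μ := by
    intro m
    have := (ContinuousMap.evalCLM (M := ℝ) ℝ m).integral_comp_comm hΦint
    simpa [ContinuousMap.evalCLM, hΦdef, Set.restrict] using this.symm
  rw [hlim] at hslln
  filter_upwards [hslln] with ω hω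
  rw [tendsto_iff_norm_sub_tendsto_zero] at hω
  convert hω using 2 with S
  rw [ContinuousMap.norm_eq_iSup_norm]
  congr 1
  funext m
  have hsum : ∑ s ∈ Finset.Icc 1 S, h (V s ω) m = ∑ i ∈ Finset.range S, h (V (i+1) ω) m := by
    rw [← Finset.Ico_add_one_right_eq_Icc, Finset.sum_Ico_eq_sum_range]
    simp [Nat.add_comm]
  simp only [Real.norm_eq_abs, ContinuousMap.sub_apply, ContinuousMap.smul_apply,
    ContinuousMap.sum_apply, heval, smul_eq_mul, hsum, Finset.mul_sum]
  rfl
end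

section
/- Let n ≥ 1 and let F : ℝⁿ → ℝⁿ be continuously differentiable with F(z*) = 0 for some z* ∈ ℝⁿ. Suppose there exist η > 0 and C > 0 such that for every z with ‖z − z*‖ ≤ η the Fréchet derivative DF(z) is invertible with ‖DF(z)^{-1}‖ ≤ C. Let (G_N)_{N≥1} be continuously differentiable maps ℝⁿ → ℝⁿ such that sup_{‖z − z*‖ ≤ η} ‖G_N(z) − F(z)‖ → 0 and sup_{‖z − z*‖ ≤ η} ‖DG_N(z) − DF(z)‖ → 0 as N → ∞. Then there exist η' ∈ (0, η] and N₀ ∈ ℕ such that for every N ≥ N₀ the map G_N has exactly one zero z_N in the closed ball B̄(z*, η'), and z_N → z* as N → ∞. -/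
open Filter Metric
open scoped NNReal

set_option maxHeartbeats 1000000

/-- Perturbation of a regular root: uniformly convergent surrogate maps have locally
unique zeros converging to the exact zero. -/
theorem stmt_8 (n : ℕ) (hn : 1 ≤ n)
    (F : EuclideanSpace ℝ (Fin n) → EuclideanSpace ℝ (Fin n))
    (hF : ContDiff ℝ 1 F)
    (zstar : EuclideanSpace ℝ (Fin n)) (hz : F zstar = 0)
    (η C : ℝ) (hη : 0 < η) (hC : 0 < C)
    (hinv : ∀ z ∈ closedBall zstar η,
      ∃ B : EuclideanSpace ℝ (Fin n) →L[ℝ] EuclideanSpace ℝ (Fin n),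
        (fderiv ℝ F z).comp B = ContinuousLinearMap.id ℝ (EuclideanSpace ℝ (Fin n)) ∧
        B.comp (fderiv ℝ F z) = ContinuousLinearMap.id ℝ (EuclideanSpace ℝ (Fin n)) ∧
        ‖B‖ ≤ C)
    (G : ℕ → EuclideanSpace ℝ (Fin n) → EuclideanSpace ℝ (Fin n))
    (hG : ∀ N, ContDiff ℝ 1 (G N))
    (hG0 : Tendsto (fun N => ⨆ z : closedBall zstar η, ‖G N z - F z‖) atTop (nhds 0))
    (hG1 : Tendsto (fun N => ⨆ z : closedBall zstar η, ‖fderiv ℝ (G N) z - fderiv ℝ F z‖)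
      atTop (nhds 0)) :
    ∃ η' : ℝ, 0 < η' ∧ η' ≤ η ∧ ∃ N₀ : ℕ, ∃ zseq : ℕ → EuclideanSpace ℝ (Fin n),
      (∀ N ≥ N₀, zseq N ∈ closedBall zstar η' ∧ G N (zseq N) = 0 ∧
        ∀ z ∈ closedBall zstar η', G N z = 0 → z = zseq N) ∧
      Tendsto zseq atTop (nhds zstar) := by
  obtain ⟨B, hB1, hB2, hBC⟩ := hinv zstar (mem_closedBall_self hη.le)
  -- norm bound of B applied to vectors
  have hBnorm : ∀ x : EuclideanSpace ℝ (Fin n), ‖B x‖ ≤ C * ‖x‖ := fun x =>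
    (B.le_opNorm x).trans (mul_le_mul_of_nonneg_right hBC (norm_nonneg x))
  -- B kills only 0 on the image of G N: if B x = 0 then x = 0
  have hBinj : ∀ x : EuclideanSpace ℝ (Fin n), B x = 0 → x = 0 := by
    intro x hx
    have : (fderiv ℝ F zstar).comp B x = x := by rw [hB1]; rfl
    rw [ContinuousLinearMap.comp_apply, hx, map_zero] at this
    exact this.symm
  -- continuity of fderiv F
  have hFc : Continuous (fderiv ℝ F) := hF.continuous_fderiv one_ne_zero
  have hC4 : (0 : ℝ) < 1 / (4 * C) := by positivity
  obtain ⟨δ, hδpos, hδ⟩ := Metric.continuousAt_iff.mp hFc.continuousAt (1 / (4 * C)) hC4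
  -- choose η'
  set η' := min η (δ / 2) with hη'def
  have hη'pos : 0 < η' := lt_min hη (by linarith)
  have hη'le : η' ≤ η := min_le_left _ _
  have hball : closedBall zstar η' ⊆ closedBall zstar η := closedBall_subset_closedBall hη'le
  have hFvar : ∀ z ∈ closedBall zstar η', ‖fderiv ℝ F z - fderiv ℝ F zstar‖ ≤ 1 / (4 * C) := by
    intro z hzmem
    have h1 : dist z zstar < δ := by
      have := mem_closedBall.mp hzmem
      calc dist z zstar ≤ η' := this
        _ ≤ δ / 2 := min_le_right _ _
        _ < δ := by linarith
    have := hδ h1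
    rw [dist_eq_norm] at this
    exact this.le
  -- bounds from the suprema
  haveI : CompactSpace (closedBall zstar η) :=
    isCompact_iff_compactSpace.mp (isCompact_closedBall zstar η)
  have hbdd0 : ∀ N, ∀ z ∈ closedBall zstar η,
      ‖G N z - F z‖ ≤ ⨆ w : closedBall zstar η, ‖G N w - F w‖ := by
    intro N z hzmem
    have hcont : Continuous fun w : closedBall zstar η => ‖G N w - F w‖ :=
      (((hG N).continuous.sub hF.continuous).norm).comp continuous_subtype_val
    exact le_ciSup (isCompact_range hcont).bddAbove ⟨z, hzmem⟩
  have hbdd1 : ∀ N, ∀ z ∈ closedBall zstar η,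
      ‖fderiv ℝ (G N) z - fderiv ℝ F z‖ ≤
        ⨆ w : closedBall zstar η, ‖fderiv ℝ (G N) w - fderiv ℝ F w‖ := by
    intro N z hzmem
    have hcont : Continuous fun w : closedBall zstar η =>
        ‖fderiv ℝ (G N) w - fderiv ℝ F w‖ :=
      ((((hG N).continuous_fderiv one_ne_zero).sub hFc).norm).comp continuous_subtype_val
    exact le_ciSup (isCompact_range hcont).bddAbove ⟨z, hzmem⟩
  -- choose N₀
  have hev0 : ∀ᶠ N in atTop,
      (⨆ w : closedBall zstar η, ‖G N w - F w‖) < η' / (2 * C) :=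
    hG0.eventually (gt_mem_nhds (by positivity))
  have hev1 : ∀ᶠ N in atTop,
      (⨆ w : closedBall zstar η, ‖fderiv ℝ (G N) w - fderiv ℝ F w‖) < 1 / (4 * C) :=
    hG1.eventually (gt_mem_nhds hC4)
  obtain ⟨N₀, hN₀⟩ := eventually_atTop.mp (hev0.and hev1)
  -- key existence/uniqueness for each N ≥ N₀
  have key : ∀ N ≥ N₀, ∃ w : EuclideanSpace ℝ (Fin n), w ∈ closedBall zstar η' ∧ G N w = 0 ∧
      (∀ z ∈ closedBall zstar η', G N z = 0 → z = w) ∧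
      ‖w - zstar‖ ≤ 2 * C * (⨆ w : closedBall zstar η, ‖G N w - F w‖) := by
    intro N hN
    obtain ⟨hs0, hs1⟩ := hN₀ N hN
    have hb0 : ∀ z ∈ closedBall zstar η, ‖G N z - F z‖ ≤ η' / (2 * C) :=
      fun z hzm => (hbdd0 N z hzm).trans hs0.le
    have hb1 : ∀ z ∈ closedBall zstar η, ‖fderiv ℝ (G N) z - fderiv ℝ F z‖ ≤ 1 / (4 * C) :=
      fun z hzm => (hbdd1 N z hzm).trans hs1.le
    -- Newton-type map
    set T : EuclideanSpace ℝ (Fin n) → EuclideanSpace ℝ (Fin n) := fun z => z - B (G N z) with hTdef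
    have hTderiv : ∀ z : EuclideanSpace ℝ (Fin n), HasFDerivAt T
        (ContinuousLinearMap.id ℝ (EuclideanSpace ℝ (Fin n)) - B.comp (fderiv ℝ (G N) z)) z := by
      intro z
      have hGd : HasFDerivAt (G N) (fderiv ℝ (G N) z) z :=
        ((hG N).differentiable one_ne_zero z).hasFDerivAt
      exact (hasFDerivAt_id z).sub (B.hasFDerivAt.comp z hGd)
    have hTnorm : ∀ z ∈ closedBall zstar η',
        ‖ContinuousLinearMap.id ℝ (EuclideanSpace ℝ (Fin n)) - B.comp (fderiv ℝ (G N) z)‖ ≤ 1 / 2 := by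
      intro z hzm
      have heq : ContinuousLinearMap.id ℝ (EuclideanSpace ℝ (Fin n)) - B.comp (fderiv ℝ (G N) z) =
          B.comp (fderiv ℝ F zstar - fderiv ℝ (G N) z) := by
        rw [ContinuousLinearMap.comp_sub, hB2]
      rw [heq]
      have h1 : ‖fderiv ℝ F zstar - fderiv ℝ (G N) z‖ ≤ 1 / (4 * C) + 1 / (4 * C) := by
        have : fderiv ℝ F zstar - fderiv ℝ (G N) z =
            -(fderiv ℝ F z - fderiv ℝ F zstar) + -(fderiv ℝ (G N) z - fderiv ℝ F z) := by
          abel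
        rw [this]
        calc ‖-(fderiv ℝ F z - fderiv ℝ F zstar) + -(fderiv ℝ (G N) z - fderiv ℝ F z)‖
            ≤ ‖-(fderiv ℝ F z - fderiv ℝ F zstar)‖ + ‖-(fderiv ℝ (G N) z - fderiv ℝ F z)‖ :=
              norm_add_le _ _
          _ ≤ 1 / (4 * C) + 1 / (4 * C) := by
              rw [norm_neg, norm_neg]
              exact add_le_add (hFvar z hzm) (hb1 z (hball hzm))
      calc ‖B.comp (fderiv ℝ F zstar - fderiv ℝ (G N) z)‖
          ≤ ‖B‖ * ‖fderiv ℝ F zstar - fderiv ℝ (G N) z‖ := B.opNorm_comp_le _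
        _ ≤ C * (1 / (4 * C) + 1 / (4 * C)) := by
            apply mul_le_mul hBC h1 (norm_nonneg _) hC.le
        _ = 1 / 2 := by field_simp; ring
    have hLip : ∀ x ∈ closedBall zstar η', ∀ y ∈ closedBall zstar η',
        ‖T y - T x‖ ≤ 1 / 2 * ‖y - x‖ := by
      intro x hx y hy
      exact (convex_closedBall zstar η').norm_image_sub_le_of_norm_hasFDerivWithin_le
        (fun w hw => (hTderiv w).hasFDerivWithinAt) hTnorm hx hy
    -- T at zstar
    have hTzstar : ‖T zstar - zstar‖ ≤ C * (η' / (2 * C)) := by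
      have h1 : T zstar - zstar = -(B (G N zstar)) := by simp [hTdef]
      rw [h1, norm_neg]
      have h2 : ‖G N zstar‖ ≤ η' / (2 * C) := by
        have := hb0 zstar (mem_closedBall_self hη.le)
        rwa [hz, sub_zero] at this
      calc ‖B (G N zstar)‖ ≤ C * ‖G N zstar‖ := hBnorm _
        _ ≤ C * (η' / (2 * C)) := by
            exact mul_le_mul_of_nonneg_left h2 hC.le
    have hCη : C * (η' / (2 * C)) = η' / 2 := by field_simp
    -- T maps the ball into itself
    have hmaps : ∀ z ∈ closedBall zstar η', T z ∈ closedBall zstar η' := by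
      intro z hzm
      rw [mem_closedBall, dist_eq_norm]
      have h1 : ‖T z - zstar‖ ≤ ‖T z - T zstar‖ + ‖T zstar - zstar‖ :=
        norm_sub_le_norm_sub_add_norm_sub _ _ _
      have h2 : ‖T z - T zstar‖ ≤ 1 / 2 * ‖z - zstar‖ :=
        hLip zstar (mem_closedBall_self hη'pos.le) z hzm
      have h3 : ‖z - zstar‖ ≤ η' := by
        rw [← dist_eq_norm]; exact mem_closedBall.mp hzm
      have := hTzstar
      rw [hCη] at this
      linarith
    -- fixed point on the subtype
    haveI : Nonempty (closedBall zstar η') := ⟨⟨zstar, mem_closedBall_self hη'pos.le⟩⟩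
    haveI : CompleteSpace (closedBall zstar η') :=
      (isClosed_closedBall (x := zstar) (ε := η')).completeSpace_coe
    set T' : closedBall zstar η' → closedBall zstar η' :=
      fun z => ⟨T z, hmaps z z.2⟩ with hT'def
    have hcontr : ContractingWith (1 / 2 : ℝ≥0) T' := by
      constructor
      · rw [← NNReal.coe_lt_coe]; norm_num
      · rw [lipschitzWith_iff_dist_le_mul]
        intro x y
        rw [Subtype.dist_eq, Subtype.dist_eq, dist_eq_norm, dist_eq_norm]
        have := hLip y y.2 x x.2
        simpa using this
    set w₀ := ContractingWith.fixedPoint T' hcontr with hw₀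
    have hfix : T (w₀ : EuclideanSpace ℝ (Fin n)) = (w₀ : EuclideanSpace ℝ (Fin n)) := congrArg Subtype.val hcontr.fixedPoint_isFixedPt
    have hGzero : G N (w₀ : EuclideanSpace ℝ (Fin n)) = 0 := by
      have h1 : B (G N (w₀ : EuclideanSpace ℝ (Fin n))) = 0 := by
        have : (w₀ : EuclideanSpace ℝ (Fin n)) - B (G N (w₀ : EuclideanSpace ℝ (Fin n))) = (w₀ : EuclideanSpace ℝ (Fin n)) := hfix
        have h := sub_eq_self.mp this
        exact h
      exact hBinj _ h1
    refine ⟨(w₀ : EuclideanSpace ℝ (Fin n)), w₀.2, hGzero, ?_, ?_⟩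
    · intro z hzm hGz
      have hTz : T z = z := by simp [hTdef, hGz]
      have hfp : Function.IsFixedPt T' ⟨z, hzm⟩ := Subtype.ext hTz
      have : (⟨z, hzm⟩ : closedBall zstar η') = w₀ := hcontr.fixedPoint_unique hfp
      exact congrArg Subtype.val this
    · -- convergence bound
      have h1 : ‖(w₀ : EuclideanSpace ℝ (Fin n)) - zstar‖ ≤ ‖T (w₀ : EuclideanSpace ℝ (Fin n)) - T zstar‖ + ‖T zstar - zstar‖ := by
        rw [hfix] at *
        exact norm_sub_le_norm_sub_add_norm_sub _ _ _
      have h2 : ‖T (w₀ : EuclideanSpace ℝ (Fin n)) - T zstar‖ ≤ 1 / 2 * ‖(w₀ : EuclideanSpace ℝ (Fin n)) - zstar‖ :=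
        hLip zstar (mem_closedBall_self hη'pos.le) (w₀ : EuclideanSpace ℝ (Fin n)) w₀.2
      have h3 : ‖T zstar - zstar‖ ≤ C * ‖G N zstar - F zstar‖ := by
        have heq : T zstar - zstar = -(B (G N zstar)) := by simp [hTdef]
        rw [heq, norm_neg, hz, sub_zero]
        exact hBnorm _
      have h4 : ‖G N zstar - F zstar‖ ≤ ⨆ w : closedBall zstar η, ‖G N w - F w‖ :=
        hbdd0 N zstar (mem_closedBall_self hη.le)
      have h5 : C * ‖G N zstar - F zstar‖ ≤
          C * (⨆ w : closedBall zstar η, ‖G N w - F w‖) :=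
        mul_le_mul_of_nonneg_left h4 hC.le
      nlinarith [norm_nonneg ((w₀ : EuclideanSpace ℝ (Fin n)) - zstar)]
  -- define zseq
  classical
  refine ⟨η', hη'pos, hη'le, N₀,
    fun N => if h : N₀ ≤ N then (key N h).choose else zstar, ?_, ?_⟩
  · intro N hN
    simp only [dif_pos hN]
    obtain ⟨h1, h2, h3, _⟩ := (key N hN).choose_spec
    exact ⟨h1, h2, h3⟩
  · rw [tendsto_iff_norm_sub_tendsto_zero]
    apply squeeze_zero_norm'
      (a := fun N => 2 * C * (⨆ w : closedBall zstar η, ‖G N w - F w‖))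
    · filter_upwards [eventually_ge_atTop N₀] with N hN
      simp only [dif_pos hN, norm_norm]
      exact ((key N hN).choose_spec).2.2.2
    · have := hG0.const_mul (2 * C)
      simpa using this
end

section
/- Let d ≥ 1 and let g : ℝ^d → ℝ be convex (hence continuous) and strictly convex along zero-sum directions, i.e., for all m₁ ≠ m₂ ∈ ℝ^d with Σ_{k=1}^d (m₁ − m₂)_k = 0 one has g((m₁ + m₂)/2) < (g(m₁) + g(m₂))/2. Suppose m₁* and m₂* both attain the minimum of m ↦ Σ_{k=1}^d m_k over the acceptance set A := {m ∈ ℝ^d : g(m) ≤ 0}; that is, g(m₁*) ≤ 0, g(m₂*) ≤ 0, and Σ_k (m₁*)_k = Σ_k (m₂*)_k = inf{Σ_k m_k : g(m) ≤ 0}. Then m₁* = m₂*. -/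
/-! Strict convexity along the zero-sum direction `m₁* - m₂*` makes `g` negative at the
midpoint of two distinct optimal allocations, and the midpoint has the same total capital.
Since a convex function on `ℝ^d` is continuous, the constraint stays negative after removing
a little capital from one coordinate, which contradicts optimality. -/

open Filter Topology

theorem exists_neg_and_lt_of_continuousAt {E : Type*} [AddCommGroup E] [Module ℝ E]
    [TopologicalSpace E] [ContinuousSMul ℝ E] [ContinuousSub E]
    {g : E → ℝ} {φ : E →ₗ[ℝ] ℝ} {m v : E} (hg : ContinuousAt g m) (hm : g m < 0)
    (hv : 0 < φ v) : ∃ m', g m' < 0 ∧ φ m' < φ m := by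
  have hpath : Tendsto (fun t : ℝ => m - t • v) (𝓝[>] 0) (𝓝 m) := by
    have : Tendsto (fun t : ℝ => m - t • v) (𝓝 0) (𝓝 (m - (0 : ℝ) • v)) :=
      (continuous_const.sub (continuous_id.smul continuous_const)).tendsto 0
    rw [zero_smul, sub_zero] at this
    exact this.mono_left nhdsWithin_le_nhds
  obtain ⟨t, hgt, ht⟩ :=
    ((hpath.eventually (hg.eventually (gt_mem_nhds hm))).and self_mem_nhdsWithin).exists
  refine ⟨m - t • v, hgt, ?_⟩
  rw [map_sub, map_smul, smul_eq_mul, sub_lt_self_iff]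
  exact mul_pos ht hv

noncomputable def totalCapital (ι : Type*) [Fintype ι] : EuclideanSpace ℝ ι →ₗ[ℝ] ℝ :=
  ∑ k, (EuclideanSpace.proj k : EuclideanSpace ℝ ι →L[ℝ] ℝ).toLinearMap

@[simp]
theorem totalCapital_apply {ι : Type*} [Fintype ι] (m : EuclideanSpace ℝ ι) :
    totalCapital ι m = ∑ k, m k := by
  simp [totalCapital]

theorem stmt_16_general (d : ℕ)
    (g : EuclideanSpace ℝ (Fin d) → ℝ)
    (hconv : ConvexOn ℝ Set.univ g)
    (hstrict : ∀ m₁ m₂ : EuclideanSpace ℝ (Fin d), m₁ ≠ m₂ →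
      (∑ k, (m₁ - m₂) k) = 0 →
      g (((1 : ℝ) / 2) • (m₁ + m₂)) < (g m₁ + g m₂) / 2)
    (mstar₁ mstar₂ : EuclideanSpace ℝ (Fin d))
    (hm₁ : g mstar₁ ≤ 0) (hm₂ : g mstar₂ ≤ 0)
    (hsum : (∑ k, mstar₁ k) = ∑ k, mstar₂ k)
    (hmin₁ : ∀ m : EuclideanSpace ℝ (Fin d), g m ≤ 0 → (∑ k, mstar₁ k) ≤ ∑ k, m k) :
    mstar₁ = mstar₂ := by
  by_contra hne
  -- any index gives a direction `single i 1` of positive capital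
  obtain ⟨i, -⟩ : ∃ i, mstar₁ i ≠ mstar₂ i := by
    by_contra! h
    exact hne (PiLp.ext h)
  set m := ((1 : ℝ) / 2) • (mstar₁ + mstar₂)
  have hzero : ∑ k, (mstar₁ - mstar₂) k = 0 := by
    simp only [PiLp.sub_apply, Finset.sum_sub_distrib, hsum, sub_self]
  have hgm : g m < 0 := by linarith [hstrict mstar₁ mstar₂ hne hzero]
  have hcap : totalCapital _ m = ∑ k, mstar₁ k := by
    simp only [m, map_smul, map_add, totalCapital_apply, ← hsum, smul_eq_mul]
    ring
  have hcont : ContinuousAt g m := (hconv.continuousOn isOpen_univ).continuousAt Filter.univ_mem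
  obtain ⟨m', hgm', hlt⟩ := exists_neg_and_lt_of_continuousAt (φ := totalCapital _)
    (v := EuclideanSpace.single i 1) hcont hgm (by simp)
  rw [hcap, totalCapital_apply] at hlt
  linarith [hmin₁ m' hgm'.le]

/-- Uniqueness of the optimal risk allocation: if the constraint function `g` is convex
and strictly convex along zero-sum directions, then the minimizer of the total capital
`m ↦ ∑ k, m k` over the acceptance set `A = {m : g m ≤ 0}` is unique.  "Both attain the
infimum of the total capital over `A`" is expressed by membership in `A`, equality of
the two total capitals, and minimality of each among all elements of `A`. -/
theorem stmt_16 (d : ℕ) (hd : 1 ≤ d)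
    (g : EuclideanSpace ℝ (Fin d) → ℝ)
    (hconv : ConvexOn ℝ Set.univ g)
    (hstrict : ∀ m₁ m₂ : EuclideanSpace ℝ (Fin d), m₁ ≠ m₂ →
      (∑ k, (m₁ - m₂) k) = 0 →
      g (((1 : ℝ) / 2) • (m₁ + m₂)) < (g m₁ + g m₂) / 2)
    (mstar₁ mstar₂ : EuclideanSpace ℝ (Fin d))
    (hm₁ : g mstar₁ ≤ 0) (hm₂ : g mstar₂ ≤ 0)
    (hsum : (∑ k, mstar₁ k) = ∑ k, mstar₂ k)
    (hmin₁ : ∀ m : EuclideanSpace ℝ (Fin d), g m ≤ 0 → (∑ k, mstar₁ k) ≤ ∑ k, m k)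
    (hmin₂ : ∀ m : EuclideanSpace ℝ (Fin d), g m ≤ 0 → (∑ k, mstar₂ k) ≤ ∑ k, m k) :
    mstar₁ = mstar₂ :=
  stmt_16_general d g hconv hstrict mstar₁ mstar₂ hm₁ hm₂ hsum hmin₁
end
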